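/- Let V be a standard Borel space and let (X_J)_{J∈𝒥} be a V-valued exchangeable array, realized canonically on Ω = V^𝒥 with law P, exchangeable σ-algebra ℰ and tail σ-algebra 𝒢. Then for every A ∈ ℰ there exists B ∈ 𝒢 such that P(A Δ B) = 0, where A Δ B denotes the symmetric difference; in other words, ℰ and 𝒢 coincide up to P-null sets. -/

import Mathlib

open MeasureTheory Filter Topology

noncomputable section

/-- The index set `𝒥`: nonempty subsets of `ℕ` of cardinality at most `k`. -/
abbrev Idx (k : ℕ) := {J : Finset ℕ // J.Nonempty ∧ J.card ≤ k}

/-- Action of a permutation of `ℕ` on the index set: `J ↦ τ(J)`. -/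
def permIdx (k : ℕ) (τ : Equiv.Perm ℕ) (J : Idx k) : Idx k :=
  ⟨J.1.image τ, J.2.1.image τ, by
    rw [Finset.card_image_of_injective _ τ.injective]; exact J.2.2⟩

/-- Action of a permutation on the canonical space `V ^ 𝒥`. -/
def permAct (k : ℕ) (V : Type*) (τ : Equiv.Perm ℕ) (ω : Idx k → V) : Idx k → V :=
  fun J => ω (permIdx k τ J)

/-- Exchangeability of the canonical array. -/
def IsExchangeable (k : ℕ) {V : Type*} [MeasurableSpace V] (P : Measure (Idx k → V)) : Prop :=
  ∀ τ : Equiv.Perm ℕ, {x | τ x ≠ x}.Finite → Measure.map (permAct k V τ) P = P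

/-- The σ-algebra `ℰ_N` of measurable sets invariant under all permutations of `{0, …, N-1}`. -/
def exchSigmaN (k : ℕ) (V : Type*) [MeasurableSpace V] (N : ℕ) :
    MeasurableSpace (Idx k → V) where
  MeasurableSet' A := MeasurableSet A ∧
    ∀ τ : Equiv.Perm ℕ, (∀ x, N ≤ x → τ x = x) → permAct k V τ ⁻¹' A = A
  measurableSet_empty := ⟨MeasurableSet.empty, fun _ _ => by simp⟩
  measurableSet_compl := fun A hA => ⟨hA.1.compl, fun τ hτ => by
    rw [Set.preimage_compl, hA.2 τ hτ]⟩
  measurableSet_iUnion := fun f hf => ⟨MeasurableSet.iUnion fun i => (hf i).1,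
    fun τ hτ => by
      rw [Set.preimage_iUnion]
      exact Set.iUnion_congr fun i => (hf i).2 τ hτ⟩

/-- The exchangeable σ-algebra `ℰ = ⋂_N ℰ_N`. -/
def exchSigma (k : ℕ) (V : Type*) [MeasurableSpace V] : MeasurableSpace (Idx k → V) :=
  ⨅ N : ℕ, exchSigmaN k V N

/-- The `N`-fold shift `S^N` on the index set: `{γ₁,…,γ_l} ↦ {γ₁+N,…,γ_l+N}`. -/
def shiftIdx (k : ℕ) (N : ℕ) (J : Idx k) : Idx k :=
  ⟨J.1.image (· + N), J.2.1.image _, by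
    rw [Finset.card_image_of_injective _ (add_left_injective N)]; exact J.2.2⟩

/-- The σ-algebra `𝒢_N = σ(X_{S^N(J)} : J ∈ 𝒥)`. -/
def tailSigmaN (k : ℕ) (V : Type*) [MeasurableSpace V] (N : ℕ) :
    MeasurableSpace (Idx k → V) :=
  MeasurableSpace.comap (fun ω : Idx k → V => fun J => ω (shiftIdx k N J)) inferInstance

/-- The tail σ-algebra `𝒢 = ⋂_{N ≥ 1} 𝒢_N`. -/
def tailSigma (k : ℕ) (V : Type*) [MeasurableSpace V] : MeasurableSpace (Idx k → V) :=
  ⨅ N : ℕ, tailSigmaN k V (N + 1)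

/-!
Approximate `A ∈ ℰ` by a cylinder set `t` depending only on the coordinates `X_J` with
`J ⊆ {0, …, n-1}`. The permutation `τ` swapping the blocks `{0, …, n-1}` and `{n, …, 2n-1}` leaves
`A` invariant and the law `P` unchanged, and turns `t` into a set depending only on the shifted
coordinates `X_{S^n(J)}`; so `A` is approximated arbitrarily well by sets of `𝒢_n` for every `n`.
Approximants `B_n ∈ 𝒢_n` with summable errors then have `limsup B_n ∈ 𝒢`, and `A Δ limsup B_n` is
null by Borel–Cantelli.
-/

theorem symmDiff_limsup_subset {α ι : Type*} {f : Filter ι} [f.NeBot] (A : Set α)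
    (B : ι → Set α) :
    symmDiff A (limsup B f) ⊆ limsup (fun i => symmDiff A (B i)) f := by
  intro x hx
  simp only [mem_limsup_iff_frequently_mem, Set.mem_symmDiff] at hx ⊢
  rcases hx with ⟨hxA, hxB⟩ | ⟨hxB, hxA⟩
  · exact (not_frequently.1 hxB).frequently.mono fun _ h => Or.inl ⟨hxA, h⟩
  · exact hxB.mono fun _ h => Or.inr ⟨h, hxA⟩

theorem exists_measurableSet_iInf_measure_symmDiff_eq_zero {α : Type*} [MeasurableSpace α]
    {μ : Measure α} {m : ℕ → MeasurableSpace α} (hm : Antitone m) {A : Set α}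
    (happrox : ∀ N, ∀ ε : ℝ, 0 < ε →
      ∃ B, MeasurableSet[m N] B ∧ μ (symmDiff A B) < ENNReal.ofReal ε) :
    ∃ B, MeasurableSet[⨅ N, m N] B ∧ μ (symmDiff A B) = 0 := by
  obtain ⟨δ, hδ_pos, hδ_sum⟩ := ENNReal.exists_pos_sum_of_countable one_ne_zero ℕ
  choose B hB_meas hB_approx using fun n => happrox n (δ n) (hδ_pos n)
  refine ⟨limsup B atTop, MeasurableSpace.measurableSet_iInf.2 fun N => ?_, ?_⟩
  · rw [← limsup_nat_add B N]
    exact @MeasurableSet.measurableSet_limsup _ (m N) _ fun n =>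
      hm (Nat.le_add_left N n) _ (hB_meas (n + N))
  · refine measure_mono_null (symmDiff_limsup_subset A B) (measure_limsup_atTop_eq_zero ?_)
    refine ne_top_of_le_ne_top (hδ_sum.trans ENNReal.one_lt_top).ne
      (ENNReal.tsum_le_tsum fun n => ?_)
    simpa using (hB_approx n).le

section Exchangeable

variable {k : ℕ} {V : Type*}

variable (k V) in
def shiftAct (N : ℕ) (ω : Idx k → V) : Idx k → V :=
  fun J => ω (shiftIdx k N J)

theorem shiftIdx_add (a b : ℕ) (J : Idx k) :
    shiftIdx k (a + b) J = shiftIdx k b (shiftIdx k a J) := by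
  ext x
  simp [shiftIdx, add_assoc]

theorem shiftAct_add (a b : ℕ) : shiftAct k V (a + b) = shiftAct k V a ∘ shiftAct k V b := by
  funext ω J
  simp [shiftAct, shiftIdx_add]

def swapBlocks (n : ℕ) : Equiv.Perm ℕ :=
  Function.Involutive.toPerm (fun x => if x < n then x + n else if x < 2 * n then x - n else x)
    (by intro x; dsimp only; split_ifs <;> omega)

theorem swapBlocks_apply (n x : ℕ) :
    swapBlocks n x = if x < n then x + n else if x < 2 * n then x - n else x :=
  rfl

theorem swapBlocks_apply_of_lt {n x : ℕ} (h : x < n) : swapBlocks n x = x + n := by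
  rw [swapBlocks_apply, if_pos h]

theorem swapBlocks_apply_of_le {n x : ℕ} (h : 2 * n ≤ x) : swapBlocks n x = x := by
  rw [swapBlocks_apply, if_neg (by omega), if_neg (by omega)]

theorem finite_swapBlocks_ne (n : ℕ) : {x | swapBlocks n x ≠ x}.Finite :=
  (Set.finite_Iio (2 * n)).subset fun _ hx => not_le.1 fun h => hx (swapBlocks_apply_of_le h)

theorem permIdx_swapBlocks {n : ℕ} {J : Idx k} (hJ : J.1 ⊆ Finset.range n) :
    permIdx k (swapBlocks n) J = shiftIdx k n J :=
  Subtype.ext <| Finset.image_congr fun _ hx =>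
    swapBlocks_apply_of_lt (Finset.mem_range.1 (hJ hx))

theorem exists_le_forall_subset_range (s : Finset (Idx k)) (N : ℕ) :
    ∃ n, N ≤ n ∧ ∀ J ∈ s, J.1 ⊆ Finset.range n := by
  obtain ⟨n, hn⟩ := (s.biUnion Subtype.val).exists_nat_subset_range
  exact ⟨max n N, le_max_right n N, fun J hJ =>
    (Finset.subset_biUnion_of_mem _ hJ).trans
      (hn.trans (Finset.range_subset_range.2 (le_max_left n N)))⟩

theorem preimage_cylinder_permAct_swapBlocks {n : ℕ} {s : Finset (Idx k)}
    (hs : ∀ J ∈ s, J.1 ⊆ Finset.range n) (S : Set (s → V)) :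
    permAct k V (swapBlocks n) ⁻¹' cylinder s S = shiftAct k V n ⁻¹' cylinder s S := by
  ext ω
  have hω : s.restrict (permAct k V (swapBlocks n) ω) = s.restrict (shiftAct k V n ω) :=
    funext fun J => congrArg ω (permIdx_swapBlocks (hs J J.2))
  simp only [Set.mem_preimage, mem_cylinder, hω]

variable [MeasurableSpace V]

theorem measurable_shiftAct (N : ℕ) : Measurable (shiftAct k V N) :=
  measurable_pi_lambda _ fun _ => measurable_pi_apply _

theorem measurable_permAct (τ : Equiv.Perm ℕ) : Measurable (permAct k V τ) :=
  measurable_pi_lambda _ fun _ => measurable_pi_apply _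

theorem tailSigmaN_antitone : Antitone (tailSigmaN k V) := by
  intro a b hab
  obtain ⟨c, rfl⟩ := Nat.exists_eq_add_of_le' hab
  change MeasurableSpace.comap (shiftAct k V (c + a)) _ ≤ MeasurableSpace.comap (shiftAct k V a) _
  rw [shiftAct_add, ← MeasurableSpace.comap_comp]
  exact MeasurableSpace.comap_mono (measurable_shiftAct c).comap_le

theorem IsExchangeable.exists_tailSigmaN_measure_symmDiff_lt {P : Measure (Idx k → V)}
    [IsFiniteMeasure P] (hP : IsExchangeable k P) {A : Set (Idx k → V)}
    (hA : MeasurableSet[exchSigma k V] A) (N : ℕ) {ε : ℝ} (hε : 0 < ε) :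
    ∃ B, MeasurableSet[tailSigmaN k V N] B ∧ P (symmDiff A B) < ENNReal.ofReal ε := by
  have hA_inv : ∀ M, MeasurableSet[exchSigmaN k V M] A := MeasurableSpace.measurableSet_iInf.1 hA
  have hA_meas : MeasurableSet A := (hA_inv 0).1
  obtain ⟨t, ht, hAt⟩ := (Measure.MeasureDense.of_generateFrom_isSetAlgebra_finite P
    isSetAlgebra_measurableCylinders generateFrom_measurableCylinders.symm).approx A
    hA_meas (measure_ne_top P A) ε hε
  obtain ⟨s, S, hS, rfl⟩ := (mem_measurableCylinders t).1 ht
  obtain ⟨n, hNn, hs⟩ := exists_le_forall_subset_range s N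
  have hτ : MeasurePreserving (permAct k V (swapBlocks n)) P P :=
    ⟨measurable_permAct _, hP _ (finite_swapBlocks_ne n)⟩
  have hAτ : permAct k V (swapBlocks n) ⁻¹' A = A :=
    (hA_inv (2 * n)).2 _ fun _ => swapBlocks_apply_of_le
  refine ⟨shiftAct k V n ⁻¹' cylinder s S, tailSigmaN_antitone hNn _ ⟨_, hS.cylinder, rfl⟩, ?_⟩
  calc P (symmDiff A (shiftAct k V n ⁻¹' cylinder s S))
      = P (permAct k V (swapBlocks n) ⁻¹' symmDiff A (cylinder s S)) := by
        rw [Set.preimage_symmDiff, hAτ, preimage_cylinder_permAct_swapBlocks hs]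
    _ = P (symmDiff A (cylinder s S)) :=
        hτ.measure_preimage (hA_meas.symmDiff hS.cylinder).nullMeasurableSet
    _ < ENNReal.ofReal ε := hAt

end Exchangeable

theorem statement2_general (k : ℕ) (V : Type*) [MeasurableSpace V]
    (P : Measure (Idx k → V)) [IsProbabilityMeasure P] (hP : IsExchangeable k P) :
    ∀ A : Set (Idx k → V), MeasurableSet[exchSigma k V] A →
      ∃ B : Set (Idx k → V), MeasurableSet[tailSigma k V] B ∧ P (symmDiff A B) = 0 :=
  fun _ hA => exists_measurableSet_iInf_measure_symmDiff_eq_zero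
    (fun _ _ h => tailSigmaN_antitone (Nat.succ_le_succ h))
    fun N _ hε => hP.exists_tailSigmaN_measure_symmDiff_lt hA (N + 1) hε

/-- for an exchangeable array realized canonically with law `P`, every set in
the exchangeable σ-algebra `ℰ` coincides up to a `P`-null symmetric difference with a set in the
tail σ-algebra `𝒢`. -/
theorem statement2 (k : ℕ) (V : Type*) [MeasurableSpace V] [StandardBorelSpace V]
    (P : Measure (Idx k → V)) [IsProbabilityMeasure P] (hP : IsExchangeable k P) :
    ∀ A : Set (Idx k → V), MeasurableSet[exchSigma k V] A →
      ∃ B : Set (Idx k → V), MeasurableSet[tailSigma k V] B ∧ P (symmDiff A B) = 0 :=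
  statement2_general k V P hP

end
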